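/- arXiv:math/0305292 — 5 statements merged into one kernel-verified Lean document; each statement's English description precedes it below -/
import Mathlib

section
/- Let 0 ≤ k ≤ n. The unitary group of ℂⁿ acts transitively on the set Γ_k of coisotropic real subspaces of ℂⁿ of real dimension n+k: for every coisotropic real-linear subspace C ⊆ ℂⁿ with dim_ℝ C = n+k there exists a unitary (complex-linear, Hermitian-inner-product-preserving) automorphism A of ℂⁿ such that A(ℂ^k × ℝ^{n−k}) = C. -/
noncomputable section

/-- The real inner product `g(u,v) = Re⟨u,v⟩` on `ℂⁿ`. -/
def gR {n : ℕ} (u v : EuclideanSpace ℂ (Fin n)) : ℝ :=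
  Complex.re (inner ℂ u v : ℂ)

/-- The standard symplectic form `ω(u,v) = g(iu,v)` on `ℂⁿ`. -/
def omegaR {n : ℕ} (u v : EuclideanSpace ℂ (Fin n)) : ℝ :=
  gR ((Complex.I : ℂ) • u) v

/-- The symplectic orthogonal `C^ω` of a set `C ⊆ ℂⁿ`. -/
def symplOrth {n : ℕ} (C : Set (EuclideanSpace ℂ (Fin n))) :
    Set (EuclideanSpace ℂ (Fin n)) :=
  {v | ∀ u ∈ C, omegaR u v = 0}

/-- The model coisotropic subspace `C₀ = ℂ^k × ℝ^{n−k} ⊆ ℂⁿ`, given by the vanishing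
of the imaginary parts of the last `n − k` coordinates. -/
def modelC (n k : ℕ) : Submodule ℝ (EuclideanSpace ℂ (Fin n)) where
  carrier := {v | ∀ i : Fin n, k ≤ (i : ℕ) → (v i).im = 0}
  add_mem' := by
    intro a b ha hb i hi
    simp only [PiLp.add_apply, Complex.add_im, ha i hi, hb i hi, add_zero]
  zero_mem' := by intro i hi; simp
  smul_mem' := by
    intro c a ha i hi
    simp only [PiLp.smul_apply, Complex.smul_im, ha i hi, smul_zero]

/-!
`N := C^ω` is contained in `C`, hence isotropic, and has real dimension `2n - (n + k) = n - k`
because `ω` is nondegenerate; moreover `C = N^ω`. On an isotropic subspace the Hermitian product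
is real, so a real orthonormal basis of `N` is a unitary frame. Extend it to a unitary basis `b`
of `ℂⁿ` occupying the indices `i ≥ k`: then `C = N^ω = {x | Im⟪b i, x⟫ = 0 for i ≥ k}`, which is
the image of `C₀` under the unitary map `eᵢ ↦ b i`.
-/

open Module Submodule
open scoped InnerProductSpace

section Symplectic

variable {E : Type*} [NormedAddCommGroup E] [InnerProductSpace ℂ E]

variable (E) in
def symplecticForm : LinearMap.BilinForm ℝ E :=
  LinearMap.mk₂ ℝ (fun u v => (⟪u, v⟫_ℂ).im)
    (fun u₁ u₂ v => by simp only [inner_add_left, Complex.add_im])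
    (fun r u v => by
      rw [RCLike.real_smul_eq_coe_smul (K := ℂ), inner_smul_real_left, Complex.smul_im])
    (fun u v₁ v₂ => by simp only [inner_add_right, Complex.add_im])
    (fun r u v => by
      rw [RCLike.real_smul_eq_coe_smul (K := ℂ), inner_smul_real_right, Complex.smul_im])

@[simp]
lemma symplecticForm_apply (u v : E) : symplecticForm E u v = (⟪u, v⟫_ℂ).im := rfl

lemma symplecticForm_isAlt : (symplecticForm E).IsAlt := fun u => inner_self_im (𝕜 := ℂ) u

lemma symplecticForm_nondegenerate : (symplecticForm E).Nondegenerate := by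
  refine (LinearMap.IsRefl.nondegenerate_iff_separatingLeft symplecticForm_isAlt.isRefl).mpr ?_
  intro u hu
  have h := hu (Complex.I • u)
  rw [symplecticForm_apply, inner_smul_right, Complex.I_mul_im] at h
  exact (re_inner_self_nonpos (𝕜 := ℂ)).mp h.le

end Symplectic

lemma LinearMap.BilinForm.mem_orthogonal_span_iff {R M : Type*} [CommRing R] [AddCommGroup M]
    [Module R M] (B : LinearMap.BilinForm R M) (S : Set M) (x : M) :
    x ∈ B.orthogonal (span R S) ↔ ∀ u ∈ S, B u x = 0 :=
  span_le (p := LinearMap.ker (B.flip x))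

section RealStructure

attribute [local instance] InnerProductSpace.complexToReal

variable {E : Type*} [NormedAddCommGroup E] [InnerProductSpace ℂ E]

lemma Orthonormal.complex_of_isotropic {ι : Type*} {v : ι → E} (hv : Orthonormal ℝ v)
    (hiso : ∀ i j, symplecticForm E (v i) (v j) = 0) : Orthonormal ℂ v :=
  ⟨hv.1, fun {i j} hij => Complex.ext (hv.2 hij) (hiso i j)⟩

theorem exists_orthonormalBasis_span_image_eq_of_isotropic [FiniteDimensional ℂ E]
    {ι : Type*} [Fintype ι] (hι : finrank ℂ E = Fintype.card ι) {s : Set ι} {N : Submodule ℝ E}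
    (hN : N ≤ (symplecticForm E).orthogonal N) (hs : finrank ℝ N = Nat.card s) :
    ∃ b : OrthonormalBasis ι ℂ E, span ℝ (b '' s) = N := by
  classical
  have : FiniteDimensional ℝ E := Module.Finite.trans ℂ E
  let w : OrthonormalBasis s ℝ N :=
    (stdOrthonormalBasis ℝ N).reindex (Finite.equivFinOfCardEq hs.symm).symm
  let v : ι → E := fun i => if h : i ∈ s then w ⟨i, h⟩ else 0
  have hvw : s.domRestrict v = fun i => (w i : E) := funext fun i => dif_pos i.2
  have hv : Orthonormal ℂ (s.domRestrict v) := by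
    rw [hvw]
    exact (w.orthonormal.comp_linearIsometry N.subtypeₗᵢ).complex_of_isotropic
      fun i j => hN (w j).2 (w i) (w i).2
  obtain ⟨b, hb⟩ := hv.exists_orthonormalBasis_extension_of_card_eq hι
  refine ⟨b, ?_⟩
  have hbw : b '' s = N.subtype '' Set.range w := by
    rw [Set.image_eq_range, ← Set.range_comp]
    exact congrArg Set.range (funext fun i => (hb i i.2).trans (congrFun hvw i))
  rw [hbw, span_image, ← w.coe_toBasis, w.toBasis.span_eq, map_subtype_top]

end RealStructure

lemma omegaR_eq_symplecticForm {n : ℕ} (u v : EuclideanSpace ℂ (Fin n)) :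
    omegaR u v = symplecticForm _ u v := by
  simp [omegaR, gR]

lemma symplOrth_eq_orthogonal {n : ℕ} (D : Submodule ℝ (EuclideanSpace ℂ (Fin n))) :
    symplOrth (D : Set (EuclideanSpace ℂ (Fin n))) = (symplecticForm _).orthogonal D := by
  ext v
  simp only [symplOrth, omegaR_eq_symplecticForm, Set.mem_ofPred_eq, SetLike.mem_coe,
    LinearMap.BilinForm.mem_orthogonal_iff]

lemma Fin.natCard_setOf_le_val (n k : ℕ) : Nat.card {i : Fin n | k ≤ (i : ℕ)} = n - k := by
  classical
  rw [Set.coe_ofPred, Nat.card_eq_fintype_card, Fintype.card_subtype, ← Nat.card_Ico k n,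
    ← Finset.card_map Fin.valEmbedding]
  congr 1
  ext m
  simp only [Finset.mem_map, Finset.mem_filter, Finset.mem_univ, true_and,
    Fin.valEmbedding_apply, Finset.mem_Ico]
  constructor
  · rintro ⟨i, hi, rfl⟩
    exact ⟨hi, i.isLt⟩
  · rintro ⟨hkm, hmn⟩
    exact ⟨⟨m, hmn⟩, hkm, rfl⟩

lemma OrthonormalBasis.image_repr_symm_modelC {E : Type*} [NormedAddCommGroup E]
    [InnerProductSpace ℂ E] {n : ℕ} (b : OrthonormalBasis (Fin n) ℂ E) (k : ℕ) :
    b.repr.symm '' (modelC n k : Set (EuclideanSpace ℂ (Fin n))) =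
      (symplecticForm E).orthogonal (span ℝ (b '' {i | k ≤ (i : ℕ)})) := by
  ext x
  rw [LinearIsometryEquiv.image_eq_preimage_symm, LinearIsometryEquiv.symm_symm, Set.mem_preimage,
    SetLike.mem_coe, SetLike.mem_coe, LinearMap.BilinForm.mem_orthogonal_span_iff,
    Set.forall_mem_image]
  change (∀ i : Fin n, k ≤ (i : ℕ) → (b.repr x i).im = 0) ↔ _
  simp only [b.repr_apply_apply, symplecticForm_apply, Set.mem_ofPred_eq]

theorem unitary_transitive_on_coisotropic_general (n k : ℕ)
    (C : Submodule ℝ (EuclideanSpace ℂ (Fin n)))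
    (hcoiso : symplOrth (C : Set (EuclideanSpace ℂ (Fin n))) ⊆ C)
    (hdim : Module.finrank ℝ C = n + k) :
    ∃ A : EuclideanSpace ℂ (Fin n) ≃ₗᵢ[ℂ] EuclideanSpace ℂ (Fin n),
      A '' (modelC n k : Set (EuclideanSpace ℂ (Fin n)))
        = (C : Set (EuclideanSpace ℂ (Fin n))) := by
  set ω := symplecticForm (EuclideanSpace ℂ (Fin n))
  have hNC : ω.orthogonal C ≤ C := by rwa [symplOrth_eq_orthogonal] at hcoiso
  have hdimN : finrank ℝ (ω.orthogonal C) = Nat.card {i : Fin n | k ≤ (i : ℕ)} := by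
    rw [LinearMap.BilinForm.finrank_orthogonal symplecticForm_nondegenerate,
      finrank_real_of_complex, finrank_euclideanSpace_fin, hdim, Fin.natCard_setOf_le_val]
    omega
  obtain ⟨b, hb⟩ := exists_orthonormalBasis_span_image_eq_of_isotropic (by simp)
    (LinearMap.BilinForm.orthogonal_le hNC) hdimN
  refine ⟨b.repr.symm, ?_⟩
  rw [b.image_repr_symm_modelC, hb, LinearMap.BilinForm.orthogonal_orthogonal
    symplecticForm_nondegenerate symplecticForm_isAlt.isRefl]

/-- The unitary group of `ℂⁿ` acts transitively on the set of coisotropic real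
subspaces of real dimension `n + k`: any such `C` is the image of the model
`C₀ = ℂ^k × ℝ^{n−k}` under a unitary automorphism of `ℂⁿ`. -/
theorem unitary_transitive_on_coisotropic (n k : ℕ) (hk : k ≤ n)
    (C : Submodule ℝ (EuclideanSpace ℂ (Fin n)))
    (hcoiso : symplOrth (C : Set (EuclideanSpace ℂ (Fin n))) ⊆ C)
    (hdim : Module.finrank ℝ C = n + k) :
    ∃ A : EuclideanSpace ℂ (Fin n) ≃ₗᵢ[ℂ] EuclideanSpace ℂ (Fin n),
      A '' (modelC n k : Set (EuclideanSpace ℂ (Fin n)))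
        = (C : Set (EuclideanSpace ℂ (Fin n))) :=
  unitary_transitive_on_coisotropic_general n k C hcoiso hdim

end
end

section
/- A unitary automorphism A of ℂⁿ = ℂ^k × ℂ^{n−k} satisfies A(C₀) = C₀, where C₀ = ℂ^k × ℝ^{n−k}, if and only if A is block diagonal, A = A₁ ⊕ A₂, where A₁ is a unitary automorphism of ℂ^k and A₂ is a unitary automorphism of ℂ^{n−k} mapping ℝ^{n−k} onto itself (that is, A₂ is the complexification of a real orthogonal transformation of ℝ^{n−k}). In other words, the isotropy group of C₀ in U(n) is U(k) × O(n−k). -/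
/-- The model coisotropic subspace `C₀ = ℂ^k × ℝ^m ⊆ ℂ^k × ℂ^m`, as the set of vectors
whose coordinates in the second block are real. -/
def modelC0 (k m : ℕ) : Set ((Fin k ⊕ Fin m) → ℂ) :=
  {v | ∀ j : Fin m, (v (Sum.inr j)).im = 0}

/-!
Testing the inclusion `A(C₀) ⊆ C₀` on the vectors `e_i`, `i e_i` (for `i` in the first block)
and `e_j` (for `j` in the second block) shows that it holds exactly when `A` is block upper
triangular with a real lower right block. For a unitary matrix the lower right block `D` is then
unitary, and `B = B D* D = 0` kills the upper right block. Conversely, `A*` of a block diagonal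
matrix of that shape has the same shape, so `A` and `A⁻¹ = A*` both map `C₀` into itself.
-/

open Matrix Set

namespace Matrix

variable {l m n : Type*} [Fintype l] [Fintype m] [DecidableEq l] [DecidableEq m]

theorem conjTranspose_map_ofReal {n' : Type*} (D : Matrix n n' ℝ) :
    (D.map Complex.ofReal)ᴴ = Dᵀ.map Complex.ofReal := by
  rw [← conjTranspose_eq_transpose_of_trivial, conjTranspose_map]
  exact fun _ => (Complex.conj_ofReal _).symm

theorem map_ofReal_mem_unitaryGroup_iff {D : Matrix m m ℝ} :
    D.map Complex.ofReal ∈ unitaryGroup m ℂ ↔ D ∈ orthogonalGroup m ℝ := by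
  have hmul : (D * Dᵀ).map Complex.ofReal = D.map Complex.ofReal * Dᵀ.map Complex.ofReal :=
    Matrix.map_mul (f := Complex.ofRealHom)
  rw [mem_unitaryGroup_iff, mem_orthogonalGroup_iff, star_eq_conjTranspose,
    conjTranspose_map_ofReal, ← hmul, ← Matrix.map_one _ Complex.ofReal_zero Complex.ofReal_one]
  exact (map_injective Complex.ofReal_injective).eq_iff

variable {R : Type*} [CommRing R] [StarRing R]

theorem fromBlocks_zero₂₁_mem_unitaryGroup {A : Matrix l l R} {B : Matrix l m R}
    {D : Matrix m m R} (h : fromBlocks A B 0 D ∈ unitaryGroup (l ⊕ m) R) :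
    A ∈ unitaryGroup l R ∧ B = 0 ∧ D ∈ unitaryGroup m R := by
  rw [mem_unitaryGroup_iff, star_eq_conjTranspose, fromBlocks_conjTranspose,
    fromBlocks_multiply, ← fromBlocks_one, fromBlocks_inj] at h
  obtain ⟨hA, hB, -, hD⟩ := h
  simp only [conjTranspose_zero, Matrix.mul_zero, zero_add] at hA hB hD
  have hD' : Dᴴ * D = 1 := mul_eq_one_comm.mp hD
  have hB0 : B = 0 := by
    calc B = B * Dᴴ * D := by rw [Matrix.mul_assoc, hD', Matrix.mul_one]
      _ = 0 := by rw [hB, Matrix.zero_mul]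
  rw [hB0, Matrix.zero_mul, add_zero] at hA
  exact ⟨mem_unitaryGroup_iff.mpr hA, hB0, mem_unitaryGroup_iff.mpr hD⟩

theorem image_mulVec_eq_of_mapsTo [Fintype n] [DecidableEq n] {U : Matrix n n R}
    (hU : U ∈ unitaryGroup n R) {s : Set (n → R)} (hs : MapsTo U.mulVec s s)
    (hs' : MapsTo (star U).mulVec s s) : U.mulVec '' s = s := by
  refine SurjOn.image_eq_of_mapsTo (LeftInvOn.surjOn (fun v _ => ?_) hs') hs
  rw [mulVec_mulVec, mem_unitaryGroup_iff.mp hU, one_mulVec]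

end Matrix

theorem mapsTo_mulVec_modelC0_iff {k m : ℕ}
    (M : Matrix (Fin k ⊕ Fin m) (Fin k ⊕ Fin m) ℂ) :
    MapsTo M.mulVec (modelC0 k m) (modelC0 k m) ↔
      ∃ (A : Matrix (Fin k) (Fin k) ℂ) (B : Matrix (Fin k) (Fin m) ℂ)
        (D : Matrix (Fin m) (Fin m) ℝ), M = fromBlocks A B 0 (D.map Complex.ofReal) := by
  constructor
  · intro hM
    have hcol : ∀ c (z : ℂ), Pi.single c z ∈ modelC0 k m →
        ∀ j, (M (Sum.inr j) c * z).im = 0 :=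
      fun c z hz j => by simpa [mulVec_single] using hM hz j
    have hlower : M.toBlocks₂₁ = 0 := by
      ext j i
      have hinl : ∀ z : ℂ, Pi.single (Sum.inl i) z ∈ modelC0 k m := fun z j' => by simp
      exact Complex.ext (by simpa [toBlocks₂₁] using hcol _ Complex.I (hinl _) j)
        (by simpa [toBlocks₂₁] using hcol _ 1 (hinl 1) j)
    have hreal : M.toBlocks₂₂ = (M.toBlocks₂₂.map Complex.re).map Complex.ofReal := by
      ext j j'
      have hinr : Pi.single (Sum.inr j') (1 : ℂ) ∈ modelC0 k m := fun j'' => by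
        by_cases h : j'' = j' <;> simp [h]
      exact Complex.ext rfl (by simpa [toBlocks₂₂] using hcol _ 1 hinr j)
    refine ⟨M.toBlocks₁₁, M.toBlocks₁₂, M.toBlocks₂₂.map Complex.re, ?_⟩
    rw [← hlower, ← hreal, fromBlocks_toBlocks]
  · rintro ⟨A, B, D, rfl⟩ v hv j
    rw [fromBlocks_mulVec]
    simp only [Sum.elim_inr, zero_mulVec, zero_add, mulVec, dotProduct,
      Function.comp_apply, map_apply, Complex.im_sum, Complex.im_ofReal_mul, hv _, mul_zero,
      Finset.sum_const_zero]

/-- A unitary matrix `A` of `ℂⁿ = ℂ^k × ℂ^m` satisfies `A(C₀) = C₀`,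
where `C₀ = ℂ^k × ℝ^m`, if and only if `A` is block diagonal `A = A₁ ⊕ A₂` with
`A₁` unitary on `ℂ^k` and `A₂` the complexification of a real orthogonal matrix on
`ℝ^m`; i.e. the isotropy group of `C₀` in `U(n)` is `U(k) × O(n−k)`. -/
theorem isotropy_of_model_coisotropic (k m : ℕ)
    (A : Matrix.unitaryGroup (Fin k ⊕ Fin m) ℂ) :
    (fun v => (A : Matrix (Fin k ⊕ Fin m) (Fin k ⊕ Fin m) ℂ).mulVec v) '' modelC0 k m
        = modelC0 k m ↔
      ∃ A₁ ∈ Matrix.unitaryGroup (Fin k) ℂ, ∃ A₂ ∈ Matrix.orthogonalGroup (Fin m) ℝ,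
        (A : Matrix (Fin k ⊕ Fin m) (Fin k ⊕ Fin m) ℂ)
          = Matrix.fromBlocks A₁ 0 0 (A₂.map Complex.ofReal) := by
  constructor
  · intro himg
    have hmaps : MapsTo (A : Matrix (Fin k ⊕ Fin m) (Fin k ⊕ Fin m) ℂ).mulVec
        (modelC0 k m) (modelC0 k m) := fun v hv => himg ▸ mem_image_of_mem _ hv
    obtain ⟨A₁, B, A₂, hA⟩ := (mapsTo_mulVec_modelC0_iff _).mp hmaps
    obtain ⟨hA₁, rfl, hA₂⟩ := fromBlocks_zero₂₁_mem_unitaryGroup (hA ▸ A.2)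
    exact ⟨A₁, hA₁, A₂, map_ofReal_mem_unitaryGroup_iff.mp hA₂, hA⟩
  · rintro ⟨A₁, -, A₂, -, hA⟩
    have hstar : star (A : Matrix (Fin k ⊕ Fin m) (Fin k ⊕ Fin m) ℂ)
        = fromBlocks A₁ᴴ 0 0 (A₂ᵀ.map Complex.ofReal) := by
      rw [hA, star_eq_conjTranspose, fromBlocks_conjTranspose, conjTranspose_map_ofReal,
        conjTranspose_zero, conjTranspose_zero]
    exact image_mulVec_eq_of_mapsTo A.2 ((mapsTo_mulVec_modelC0_iff _).mpr ⟨_, _, _, hA⟩)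
      ((mapsTo_mulVec_modelC0_iff _).mpr ⟨_, _, _, hstar⟩)
end

section
/- The graph C_A is coisotropic if and only if Bᵀξ − Bξ = a(x_ξ) for all ξ ∈ ℝ^{n−k}; equivalently, if and only if ξ·(Bη) − η·(Bξ) = ω(x_ξ, x_η) for all ξ, η ∈ ℝ^{n−k}. (This is the condition A_I − (A_I)* + A_H π_H (A_H)* = 0 on the components A_H, A_I of A.) -/
noncomputable section

/-- The standard symplectic form `ω(u,v) = Re⟨iu,v⟩` on `ℂ^ι`, with the Hermitian
inner product `⟨u,v⟩ = ∑ u_j * conj v_j`. -/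
def omegaV {ι : Type*} [Fintype ι] (u v : ι → ℂ) : ℝ :=
  ∑ j, (Complex.I * u j * (starRingEnd ℂ) (v j)).re

/-- The symplectic form on `ℂⁿ = ℂ^k × ℂ^m`. -/
def omegaF {k m : ℕ} (p q : (Fin k → ℂ) × (Fin m → ℂ)) : ℝ :=
  omegaV p.1 q.1 + omegaV p.2 q.2

/-- The graph `C_A = {x + A(x) : x ∈ C₀}` of the linear map `A : C₀ → C₀^⊥`,
`A(v_H, v_I) = i·a(v_H) + i·B v_I`, over the model coisotropic subspace
`C₀ = ℂ^k × ℝ^m`. -/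
def graphCA {k m : ℕ} (a : (Fin k → ℂ) →ₗ[ℝ] (Fin m → ℝ))
    (B : Matrix (Fin m) (Fin m) ℝ) : Set ((Fin k → ℂ) × (Fin m → ℂ)) :=
  {p | ∃ (v : Fin k → ℂ) (ξ : Fin m → ℝ),
    p = (v, fun j => (ξ j : ℂ) + Complex.I * ((a v j : ℝ) + (B.mulVec ξ j : ℝ)))}

/-- The symplectic orthogonal of a set `S ⊆ ℂ^k × ℂ^m`. -/
def sOrthF {k m : ℕ} (S : Set ((Fin k → ℂ) × (Fin m → ℂ))) :
    Set ((Fin k → ℂ) × (Fin m → ℂ)) :=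
  {q | ∀ p ∈ S, omegaF p q = 0}

lemma omegaV_eq {ι : Type*} [Fintype ι] (u v : ι → ℂ) :
    omegaV u v = ∑ j, ((u j).re * (v j).im - (u j).im * (v j).re) := by
  unfold omegaV
  refine Finset.sum_congr rfl fun j _ => ?_
  simp [Complex.mul_re, Complex.mul_im]
  ring

lemma omegaV_nondeg {ι : Type*} [Fintype ι] [DecidableEq ι] (u : ι → ℂ)
    (h : ∀ v, omegaV v u = 0) : u = 0 := by
  have key : ∀ (j : ι) (c : ℂ),
      ∑ i, (((Pi.single j c : ι → ℂ) i).re * (u i).im - ((Pi.single j c : ι → ℂ) i).im * (u i).re)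
        = c.re * (u j).im - c.im * (u j).re := by
    intro j c
    rw [Finset.sum_eq_single j]
    · simp
    · intro b _ hb; simp [Pi.single_eq_of_ne hb]
    · simp
  funext j
  have h1 := h (Pi.single j 1)
  have h2 := h (Pi.single j Complex.I)
  rw [omegaV_eq, key] at h1 h2
  simp at h1 h2
  apply Complex.ext <;> simp [h1, h2]

lemma omegaV_sub_right {ι : Type*} [Fintype ι] (v w w' : ι → ℂ) :
    omegaV v (w - w') = omegaV v w - omegaV v w' := by
  rw [omegaV_eq, omegaV_eq, omegaV_eq, ← Finset.sum_sub_distrib]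
  refine Finset.sum_congr rfl fun j _ => ?_
  simp [Complex.sub_re, Complex.sub_im]
  ring

lemma dot_mulVec {m : ℕ} (B : Matrix (Fin m) (Fin m) ℝ) (ξ η : Fin m → ℝ) :
    ∑ j, ξ j * B.mulVec η j = ∑ j, B.transpose.mulVec ξ j * η j := by
  simp only [Matrix.mulVec, dotProduct, Matrix.transpose_apply,
    Finset.mul_sum, Finset.sum_mul]
  rw [Finset.sum_comm]
  exact Finset.sum_congr rfl fun i _ => Finset.sum_congr rfl fun j _ => by ring

lemma single_dot {m : ℕ} (j : Fin m) (c : Fin m → ℝ) :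
    ∑ i, (Pi.single j (1:ℝ) : Fin m → ℝ) i * c i = c j := by
  rw [Finset.sum_eq_single j]
  · simp
  · intro b _ hb; simp [Pi.single_eq_of_ne hb]
  · simp

lemma omegaF_graph {k m : ℕ} (a : (Fin k → ℂ) →ₗ[ℝ] (Fin m → ℝ))
    (B : Matrix (Fin m) (Fin m) ℝ) (v : Fin k → ℂ) (ξ : Fin m → ℝ)
    (w : Fin k → ℂ) (z : Fin m → ℂ) :
    omegaF (v, fun j => (ξ j : ℂ) + Complex.I * ((a v j : ℝ) + (B.mulVec ξ j : ℝ))) (w, z)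
      = omegaV v w + ∑ j, (ξ j * (z j).im - (a v j + B.mulVec ξ j) * (z j).re) := by
  unfold omegaF
  congr 1
  rw [omegaV_eq]
  refine Finset.sum_congr rfl fun j _ => ?_
  simp

lemma mem_sOrth_graph {k m : ℕ} (a : (Fin k → ℂ) →ₗ[ℝ] (Fin m → ℝ))
    (B : Matrix (Fin m) (Fin m) ℝ) (w : Fin k → ℂ) (z : Fin m → ℂ) :
    (w, z) ∈ sOrthF (graphCA a B) ↔
      ∀ (v : Fin k → ℂ) (ξ : Fin m → ℝ),
        omegaV v w + ∑ j, (ξ j * (z j).im - (a v j + B.mulVec ξ j) * (z j).re) = 0 := by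
  constructor
  · intro h v ξ
    rw [← omegaF_graph]
    exact h _ ⟨v, ξ, rfl⟩
  · rintro h p ⟨v, ξ, rfl⟩
    rw [omegaF_graph]
    exact h v ξ

lemma sOrth_char {k m : ℕ} (a : (Fin k → ℂ) →ₗ[ℝ] (Fin m → ℝ))
    (B : Matrix (Fin m) (Fin m) ℝ)
    (x : (Fin m → ℝ) → (Fin k → ℂ))
    (hx : ∀ (ξ : Fin m → ℝ) (v : Fin k → ℂ), omegaV v (x ξ) = ∑ j, a v j * ξ j)
    (w : Fin k → ℂ) (z : Fin m → ℂ) :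
    (w, z) ∈ sOrthF (graphCA a B) ↔
      (w = x (fun j => (z j).re) ∧
        ∀ j, (z j).im = B.transpose.mulVec (fun i => (z i).re) j) := by
  rw [mem_sOrth_graph]
  set η : Fin m → ℝ := fun j => (z j).re with hη
  constructor
  · intro h
    have step1 : ∀ v, omegaV v w = ∑ j, a v j * η j := by
      intro v
      have h0 := h v 0
      simp only [Pi.zero_apply, zero_mul, Matrix.mulVec_zero, add_zero, zero_sub,
        Finset.sum_neg_distrib] at h0
      linarith
    have hw : w = x η := by
      have hsub : ∀ v, omegaV v (w - x η) = 0 := by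
        intro v
        rw [omegaV_sub_right, hx, step1]
        ring
      have := omegaV_nondeg _ hsub
      exact sub_eq_zero.mp this
    refine ⟨hw, fun j => ?_⟩
    have h0 := h 0 (Pi.single j 1)
    have hz0 : omegaV (0 : Fin k → ℂ) w = 0 := by rw [omegaV_eq]; simp
    rw [hz0, map_zero] at h0
    simp only [Pi.zero_apply, zero_add, zero_add] at h0
    rw [Finset.sum_sub_distrib, single_dot] at h0
    have hd := dot_mulVec B η (Pi.single j 1)
    have e3 : ∑ i, B.mulVec (Pi.single j 1) i * (z i).re = B.transpose.mulVec η j := by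
      calc ∑ i, B.mulVec (Pi.single j 1) i * η i
          = ∑ i, η i * B.mulVec (Pi.single j 1) i :=
            Finset.sum_congr rfl fun i _ => mul_comm _ _
        _ = ∑ i, B.transpose.mulVec η i * (Pi.single j 1 : Fin m → ℝ) i := hd
        _ = ∑ i, (Pi.single j (1:ℝ) : Fin m → ℝ) i * B.transpose.mulVec η i :=
            Finset.sum_congr rfl fun i _ => mul_comm _ _
        _ = B.transpose.mulVec η j := single_dot j _
    linarith
  · rintro ⟨hw, him⟩ v ξ
    rw [hw, hx]
    have e1 : ∑ j, (ξ j * (z j).im - (a v j + B.mulVec ξ j) * (z j).re)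
        = (∑ j, ξ j * (z j).im) - ((∑ j, a v j * η j) + ∑ j, B.mulVec ξ j * η j) := by
      rw [← Finset.sum_add_distrib, ← Finset.sum_sub_distrib]
      exact Finset.sum_congr rfl fun j _ => by rw [hη]; ring
    rw [e1]
    have e2 : ∑ j, ξ j * (z j).im = ∑ j, B.mulVec ξ j * η j := by
      have := dot_mulVec B.transpose ξ η
      rw [Matrix.transpose_transpose] at this
      calc ∑ j, ξ j * (z j).im = ∑ j, ξ j * B.transpose.mulVec η j :=
            Finset.sum_congr rfl fun j _ => by rw [him j]
        _ = ∑ j, B.mulVec ξ j * η j := this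
    rw [e2]
    ring

/-- The graph `C_A` is coisotropic iff `Bᵀξ − Bξ = a(x_ξ)` for all `ξ ∈ ℝ^m`;
equivalently, iff `ξ·(Bη) − η·(Bξ) = ω(x_ξ, x_η)` for all `ξ, η ∈ ℝ^m`, where
`x_ξ ∈ ℂ^k` is the unique vector with `ω(v, x_ξ) = a(v)·ξ` for all `v ∈ ℂ^k`. -/
theorem graph_coisotropic_iff (k m : ℕ)
    (a : (Fin k → ℂ) →ₗ[ℝ] (Fin m → ℝ)) (B : Matrix (Fin m) (Fin m) ℝ)
    (x : (Fin m → ℝ) → (Fin k → ℂ))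
    (hx : ∀ (ξ : Fin m → ℝ) (v : Fin k → ℂ), omegaV v (x ξ) = ∑ j, a v j * ξ j) :
    ((sOrthF (graphCA a B) ⊆ graphCA a B) ↔
        ∀ ξ : Fin m → ℝ, B.transpose.mulVec ξ - B.mulVec ξ = a (x ξ)) ∧
    ((sOrthF (graphCA a B) ⊆ graphCA a B) ↔
        ∀ ξ η : Fin m → ℝ,
          (∑ j, ξ j * B.mulVec η j) - (∑ j, η j * B.mulVec ξ j)
            = omegaV (x ξ) (x η)) := by
  have main : (sOrthF (graphCA a B) ⊆ graphCA a B) ↔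
      ∀ ξ : Fin m → ℝ, B.transpose.mulVec ξ - B.mulVec ξ = a (x ξ) := by
    constructor
    · intro hsub η
      have hmem : ((x η, fun j => (η j : ℂ) + Complex.I * (B.transpose.mulVec η j : ℝ)) :
          (Fin k → ℂ) × (Fin m → ℂ)) ∈ sOrthF (graphCA a B) := by
        rw [sOrth_char a B x hx]
        constructor
        · refine congrArg x ?_
          funext j
          simp
        · intro j
          simp
      have hg := hsub hmem
      obtain ⟨v, ξ, hp⟩ := hg
      have hv : x η = v := congrArg Prod.fst hp
      have hz := congrArg Prod.snd hp
      have hre : ∀ j, η j = ξ j := by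
        intro j
        have := congrArg Complex.re (congrFun hz j)
        simpa using this
      have him : ∀ j, B.transpose.mulVec η j = a v j + B.mulVec ξ j := by
        intro j
        have := congrArg Complex.im (congrFun hz j)
        simpa using this
      have hξ : ξ = η := funext fun j => (hre j).symm
      funext j
      have h3 := him j
      rw [hξ, ← hv] at h3
      simp only [Pi.sub_apply]
      linarith
    · intro h1 q hq
      obtain ⟨w, z⟩ := q
      rw [sOrth_char a B x hx] at hq
      set η : Fin m → ℝ := fun j => (z j).re with hη
      obtain ⟨hw, him⟩ := hq
      refine ⟨x η, η, ?_⟩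
      have hz : z = fun j => (η j : ℂ) + Complex.I * ((a (x η) j : ℝ) + (B.mulVec η j : ℝ)) := by
        funext j
        apply Complex.ext
        · simp [hη]
        · have h2 := congrFun (h1 η) j
          simp only [Pi.sub_apply] at h2
          have h4 := him j
          simp only [Complex.add_im, Complex.ofReal_im, Complex.mul_im, Complex.I_re,
            Complex.I_im, Complex.ofReal_re, Complex.add_re, zero_mul, one_mul, zero_add, add_zero]
          rw [h4]
          linarith
      rw [Prod.ext_iff]
      exact ⟨hw, hz⟩
  have equiv : (∀ ξ : Fin m → ℝ, B.transpose.mulVec ξ - B.mulVec ξ = a (x ξ)) ↔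
      (∀ ξ η : Fin m → ℝ,
        (∑ j, ξ j * B.mulVec η j) - (∑ j, η j * B.mulVec ξ j) = omegaV (x ξ) (x η)) := by
    constructor
    · intro h ξ η
      rw [hx η (x ξ)]
      have hd := dot_mulVec B ξ η
      have hp : ∀ j, B.transpose.mulVec ξ j = B.mulVec ξ j + a (x ξ) j := by
        intro j
        have := congrFun (h ξ) j
        simp only [Pi.sub_apply] at this
        linarith
      calc (∑ j, ξ j * B.mulVec η j) - ∑ j, η j * B.mulVec ξ j
          = (∑ j, B.transpose.mulVec ξ j * η j) - ∑ j, η j * B.mulVec ξ j := by rw [hd]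
        _ = ∑ j, a (x ξ) j * η j := by
            rw [← Finset.sum_sub_distrib]
            exact Finset.sum_congr rfl fun j _ => by rw [hp j]; ring
    · intro h ξ
      funext j
      have h2 := h ξ (Pi.single j 1)
      rw [hx (Pi.single j 1) (x ξ)] at h2
      have e1 : ∑ i, (Pi.single j (1:ℝ) : Fin m → ℝ) i * B.mulVec ξ i = B.mulVec ξ j :=
        single_dot j _
      have e2 : ∑ i, a (x ξ) i * (Pi.single j (1:ℝ) : Fin m → ℝ) i = a (x ξ) j := by
        rw [Finset.sum_congr rfl fun i _ => mul_comm (a (x ξ) i) _]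
        exact single_dot j _
      have e3 : ∑ i, ξ i * B.mulVec (Pi.single j 1) i = B.transpose.mulVec ξ j := by
        rw [dot_mulVec B ξ (Pi.single j 1)]
        rw [Finset.sum_congr rfl fun i _ => mul_comm (B.transpose.mulVec ξ i) _]
        exact single_dot j _
      rw [e1, e2, e3] at h2
      simp only [Pi.sub_apply]
      linarith
  exact ⟨main, main.trans equiv⟩


end
end

section
/- Let α be an irrational real number. Then the image of the plane span_ℝ{(1,1,1), (1,α,0)} ⊆ ℝ³ under the quotient map ℝ³ → ℝ³/ℤ³ is dense in the torus ℝ³/ℤ³. -/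
/-!
The plane is the kernel of the linear form `v ↦ (v₁ - v₂) - α (v₀ - v₂)` on `ℝ³`. This form is
surjective, hence an open map, and it sends `ℤ³` onto `ℤ + αℤ`, which is dense in `ℝ` when `α` is
irrational. So the plane plus `ℤ³`, being the preimage of `ℤ + αℤ`, is dense in `ℝ³`.
-/

open scoped Pointwise

theorem dense_add_of_dense_image_of_ker_subset {E F : Type*} [AddGroup E] [TopologicalSpace E]
    [AddGroup F] [TopologicalSpace F] (f : E →+ F) (hf : IsOpenMap f) {P K : Set E}
    (hP : (f.ker : Set E) ⊆ P) (hK : Dense (f '' K)) : Dense (P + K) := by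
  refine (hK.preimage hf).mono ?_
  rintro x ⟨k, hk, hfk⟩
  refine ⟨x - k, hP ?_, k, hk, sub_add_cancel x k⟩
  simp [AddMonoidHom.mem_ker, map_sub, hfk]

def planeNormalForm (α : ℝ) : (Fin 3 → ℝ) →ₗ[ℝ] ℝ :=
  let π : Fin 3 → (Fin 3 → ℝ) →ₗ[ℝ] ℝ := LinearMap.proj
  π 1 - π 2 - α • (π 0 - π 2)

@[simp]
theorem planeNormalForm_apply (α : ℝ) (v : Fin 3 → ℝ) :
    planeNormalForm α v = v 1 - v 2 - α * (v 0 - v 2) := rfl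

theorem planeNormalForm_surjective (α : ℝ) : Function.Surjective (planeNormalForm α) :=
  fun t => ⟨![0, t, 0], by simp⟩

theorem ker_planeNormalForm_le (α : ℝ) :
    LinearMap.ker (planeNormalForm α) ≤ Submodule.span ℝ {![1, 1, 1], ![1, α, 0]} := by
  intro v hv
  have hv1 : v 1 = v 2 + (v 0 - v 2) * α := by
    rw [LinearMap.mem_ker, planeNormalForm_apply] at hv; linarith
  rw [Submodule.mem_span_pair]
  refine ⟨v 2, v 0 - v 2, funext fun i => ?_⟩
  fin_cases i <;> simp [hv1]

theorem closure_pair_le_map_planeNormalForm (α : ℝ) :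
    AddSubgroup.closure {α, 1} ≤ (AddSubgroup.pi Set.univ fun _ : Fin 3 =>
      AddSubgroup.zmultiples (1 : ℝ)).map (planeNormalForm α).toAddMonoidHom := by
  rw [AddSubgroup.closure_le, Set.insert_subset_iff, Set.singleton_subset_iff]
  refine ⟨⟨![-1, 0, 0], ?_, by simp⟩, ⟨![0, 1, 0], ?_, by simp⟩⟩ <;>
    · rw [SetLike.mem_coe, AddSubgroup.mem_pi]
      intro i _
      fin_cases i <;> simp

/-- For irrational `α`, the image of the plane `span_ℝ{(1,1,1),(1,α,0)} ⊆ ℝ³` under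
the quotient map `ℝ³ → ℝ³/ℤ³` is dense in the torus. -/
theorem leaf_dense_in_torus (α : ℝ) (hα : Irrational α) :
    Dense
      ((QuotientAddGroup.mk'
          (AddSubgroup.pi Set.univ fun _ : Fin 3 => AddSubgroup.zmultiples (1 : ℝ))) ''
        ((Submodule.span ℝ {![1, 1, 1], ![1, α, 0]} : Submodule ℝ (Fin 3 → ℝ)) :
          Set (Fin 3 → ℝ))) := by
  rw [QuotientAddGroup.coe_mk', QuotientAddGroup.dense_image_mk]
  refine dense_add_of_dense_image_of_ker_subset (planeNormalForm α).toAddMonoidHom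
    ((planeNormalForm α).isOpenMap_of_finiteDimensional (planeNormalForm_surjective α))
    (ker_planeNormalForm_le α) ?_
  have hdense : Dense (AddSubgroup.closure {α, 1} : Set ℝ) :=
    dense_addSubgroupClosure_pair_iff.2 (by rwa [div_one])
  exact hdense.mono (closure_pair_le_map_planeNormalForm α)
end

section
/- There do not exist continuously differentiable functions b₁, b₂ : ℝ⁴ → ℝ, 1-periodic in each of the four variables (y¹, y², q¹, q²), such that ∂b₂/∂q¹ − ∂b₁/∂q² = 2π² cos(2πy¹)·cos(2πy²) at every point of ℝ⁴. -/
/-!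
Restrict to the `q`-torus over `y = 0`, where the right-hand side is the constant `2π²`, and
integrate `∂b₂/∂q¹` over the unit square in both orders. Integrating first in `q¹` gives `0` by
periodicity of `b₂`; integrating first in `q²`, the equation turns the integrand into
`∂b₁/∂q² + 2π²`, whose integral is `2π²` by periodicity of `b₁`. Fubini then forces `2π² = 0`.
-/

open MeasureTheory Real

section LineIntegral

variable {E F : Type*} [NormedAddCommGroup E] [NormedSpace ℝ E]
  [NormedAddCommGroup F] [NormedSpace ℝ F] [CompleteSpace F] {f : E → F}

theorem ContDiff.integral_fderiv_apply_eq_sub (hf : ContDiff ℝ 1 f) (x u : E) (a b : ℝ) :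
    ∫ s in a..b, fderiv ℝ f (x + s • u) u = f (x + b • u) - f (x + a • u) := by
  have hline : ∀ s : ℝ, HasDerivAt (fun s : ℝ => x + s • u) u s := fun s => by
    simpa using ((hasDerivAt_id s).smul_const u).const_add x
  refine intervalIntegral.integral_eq_sub_of_hasDerivAt (f := fun s => f (x + s • u))
    (fun s _ => ?_) ?_
  · exact ((hf.differentiable one_ne_zero _).hasFDerivAt).comp_hasDerivAt s (hline s)
  · exact ((hf.continuous_fderiv_apply one_ne_zero).comp
      (f := fun s : ℝ => (x + s • u, u)) (by fun_prop)).intervalIntegrable a b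

theorem ContDiff.integral_fderiv_apply_eq_zero_of_add_eq (hf : ContDiff ℝ 1 f) {u : E}
    (hu : ∀ x, f (x + u) = f x) (x : E) :
    ∫ s in (0 : ℝ)..1, fderiv ℝ f (x + s • u) u = 0 := by
  rw [hf.integral_fderiv_apply_eq_sub, one_smul, zero_smul, add_zero, hu, sub_self]

end LineIntegral

theorem Continuous.intervalIntegral_intervalIntegral_swap {E : Type*} [NormedAddCommGroup E]
    [NormedSpace ℝ E] {F : ℝ → ℝ → E} (hF : Continuous F.uncurry) (a b c d : ℝ) :
    ∫ x in a..b, ∫ y in c..d, F x y = ∫ y in c..d, ∫ x in a..b, F x y :=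
  MeasureTheory.intervalIntegral_intervalIntegral_swap <|
    (hF.continuousOn.integrableOn_compact (isCompact_uIcc.prod isCompact_uIcc)).mono_set
      (Set.prod_mono Set.uIoc_subset_uIcc Set.uIoc_subset_uIcc)

/-- Obstruction in Zambon's example: there are no `C¹` functions `b₁, b₂` on
`ℝ⁴ ∋ (y¹,y²,q¹,q²)` (coordinates `x 0, x 1, x 2, x 3`), `1`-periodic in each
variable, with `∂b₂/∂q¹ − ∂b₁/∂q² = 2π² cos(2πy¹)·cos(2πy²)` everywhere. -/
theorem zambon_obstruction :
    ¬ ∃ b₁ b₂ : (Fin 4 → ℝ) → ℝ,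
        ContDiff ℝ 1 b₁ ∧ ContDiff ℝ 1 b₂ ∧
        (∀ (x : Fin 4 → ℝ) (i : Fin 4), b₁ (x + Pi.single i 1) = b₁ x) ∧
        (∀ (x : Fin 4 → ℝ) (i : Fin 4), b₂ (x + Pi.single i 1) = b₂ x) ∧
        (∀ x : Fin 4 → ℝ,
          fderiv ℝ b₂ x (Pi.single 2 1) - fderiv ℝ b₁ x (Pi.single 3 1) =
            2 * Real.pi ^ 2 * Real.cos (2 * Real.pi * x 0) * Real.cos (2 * Real.pi * x 1)) := by
  rintro ⟨b₁, b₂, hb₁, hb₂, hper₁, hper₂, hpde⟩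
  set e₂ : Fin 4 → ℝ := Pi.single 2 1
  set e₃ : Fin 4 → ℝ := Pi.single 3 1
  let g : ℝ → ℝ → ℝ := fun s t => fderiv ℝ b₂ (s • e₂ + t • e₃) e₂
  have hg : Continuous g.uncurry :=
    (hb₂.continuous_fderiv_apply one_ne_zero).comp
      (f := fun q : ℝ × ℝ => (q.1 • e₂ + q.2 • e₃, e₂)) (by fun_prop)
  have hg_eq : ∀ s t, g s t = fderiv ℝ b₁ (s • e₂ + t • e₃) e₃ + 2 * π ^ 2 := fun s t => by
    have := hpde (s • e₂ + t • e₃)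
    simp only [e₂, e₃, Pi.add_apply, Pi.smul_apply, smul_eq_mul, ne_eq, Fin.reduceEq,
      not_false_eq_true, Pi.single_eq_of_ne, mul_zero, add_zero, cos_zero, mul_one] at this
    linarith
  have hg_int_fst : ∀ t, ∫ s in (0 : ℝ)..1, g s t = 0 := fun t => by
    simpa [g, add_comm] using hb₂.integral_fderiv_apply_eq_zero_of_add_eq (hper₂ · 2) (t • e₃)
  have hg_int_snd : ∀ s, ∫ t in (0 : ℝ)..1, g s t = 2 * π ^ 2 := fun s => by
    have hcont : Continuous fun t : ℝ => fderiv ℝ b₁ (s • e₂ + t • e₃) e₃ :=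
      (hb₁.continuous_fderiv_apply one_ne_zero).comp
        (f := fun t : ℝ => (s • e₂ + t • e₃, e₃)) (by fun_prop)
    simp_rw [hg_eq]
    rw [intervalIntegral.integral_add (hcont.intervalIntegrable 0 1) intervalIntegrable_const,
      hb₁.integral_fderiv_apply_eq_zero_of_add_eq (hper₁ · 3)]
    simp
  have hswap := hg.intervalIntegral_intervalIntegral_swap 0 1 0 1
  simp only [hg_int_fst, hg_int_snd, intervalIntegral.integral_const, sub_zero, one_smul]
    at hswap
  exact (by positivity : (0 : ℝ) < 2 * π ^ 2).ne' hswap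
end
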